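/- For all integers n > k ≥ 1, the constant c_{n,k} = |B₂ⁿ|^{(n−k)/n} / |B₂^{n−k}| satisfies e^{−k/2} < c_{n,k} < 1. -/

import Mathlib

open MeasureTheory Set Metric
open scoped ENNReal RealInnerProductSpace NNReal

noncomputable section

abbrev E (n : ℕ) := EuclideanSpace ℝ (Fin n)

/-- A star body: compact, origin in the interior, star-shaped with respect to the
origin, and with continuous Minkowski functional (gauge). -/
def IsStarBody {n : ℕ} (K : Set (E n)) : Prop :=
  IsCompact K ∧ 0 ∈ interior K ∧
    (∀ x ∈ K, ∀ t : ℝ, 0 ≤ t → t ≤ 1 → t • x ∈ K) ∧ Continuous (gauge K)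

/-- An origin-symmetric convex body. -/
def IsSymmetricConvexBody {n : ℕ} (K : Set (E n)) : Prop :=
  IsCompact K ∧ Convex ℝ K ∧ 0 ∈ interior K ∧ ∀ x ∈ K, -x ∈ K


/-- The constant c_{n,k} = |B_2^n|^{(n-k)/n} / |B_2^{n-k}|. -/
def cnk (n k : ℕ) : ℝ :=
  (volume (ball (0 : E n) 1)).toReal ^ (((n : ℝ) - k) / n) /
    (volume (ball (0 : E (n - k)) 1)).toReal


/-! With `x = n / 2` and `y = (n - k) / 2`, the volume formula gives
`c_{n,k} = Γ(y + 1) / Γ(x + 1) ^ (y / x)`, i.e. `log c_{n,k} = f y - (y / x) f x` for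
`f t = log Γ(t + 1)`. Since `f 0 = 0` and `f` is strictly convex (`log Γ t = log Γ(t + 1) - log t`
is convex plus strictly convex), `f t / t` is strictly increasing, whence `c_{n,k} < 1`.
Convexity also bounds the slope of `f` on `[y, x]` by `f (x + 1) - f x = log (x + 1)`, so
`log c_{n,k} ≥ (x - y) (f x / x - log (x + 1))`, and the Stirling-type estimate
`x log (x + 1) - f x < x` at half-integers `x` makes this larger than `-(x - y) = -k / 2`.
That estimate holds at `x = 1/2, 1`, and the step `x ↦ x + 1` raises its left side by
`(x + 1) log ((x + 2) / (x + 1)) ≤ 1`. -/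

open Real

theorem Real.log_Gamma_add_one {x : ℝ} (hx : 0 < x) :
    log (Gamma (x + 1)) = log x + log (Gamma x) := by
  rw [Gamma_add_one hx.ne', log_mul hx.ne' (Gamma_pos_of_pos hx).ne']

theorem Real.strictConvexOn_log_Gamma : StrictConvexOn ℝ (Ioi 0) (log ∘ Gamma) := by
  have hshift : ConvexOn ℝ (Ioi 0) fun x => log (Gamma (1 + x)) :=
    (convexOn_log_Gamma.translate_right 1).subset (fun x (hx : 0 < x) => by
      simp only [mem_preimage, mem_Ioi]; linarith) (convex_Ioi 0)
  refine (hshift.add_strictConvexOn strictConcaveOn_log_Ioi.neg).congr fun x (hx : 0 < x) => ?_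
  simp only [Pi.add_apply, Pi.neg_apply, Function.comp_apply, add_comm 1 x, log_Gamma_add_one hx]
  ring

lemma log_Gamma_add_one_div_lt_div {y x : ℝ} (hy : 0 < y) (hyx : y < x) :
    log (Gamma (y + 1)) / y < log (Gamma (x + 1)) / x := by
  have h := strictConvexOn_log_Gamma.secant_strict_mono (a := 1) (x := y + 1) (y := x + 1)
    (mem_Ioi.2 one_pos) (mem_Ioi.2 (by linarith)) (mem_Ioi.2 (by linarith))
    (by linarith) (by linarith) (by linarith)
  simpa [Gamma_one] using h

lemma log_Gamma_add_one_sub_le {y x : ℝ} (hy : 0 < y) (hyx : y < x) :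
    log (Gamma (x + 1)) - log (Gamma (y + 1)) ≤ (x - y) * log (x + 1) := by
  have h := convexOn_log_Gamma.slope_mono_adjacent (x := y + 1) (y := x + 1) (z := x + 1 + 1)
    (mem_Ioi.2 (by linarith)) (mem_Ioi.2 (by linarith)) (by linarith) (by linarith)
  simp only [Function.comp_apply, log_Gamma_add_one (show 0 < x + 1 by linarith),
    add_sub_cancel_right, add_sub_add_right_eq_sub, add_sub_cancel_left, div_one] at h
  rwa [div_le_iff₀ (by linarith), mul_comm] at h

lemma mul_log_sub_log_Gamma_lt_succ {x : ℝ} (hx : 0 < x)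
    (h : x * log (x + 1) - log (Gamma (x + 1)) < x) :
    (x + 1) * log (x + 1 + 1) - log (Gamma (x + 1 + 1)) < x + 1 := by
  have hx1 : 0 < x + 1 := by linarith
  have hlog : log (x + 1 + 1) - log (x + 1) ≤ 1 / (x + 1) := by
    rw [← log_div (by linarith) hx1.ne']
    calc log ((x + 1 + 1) / (x + 1)) ≤ (x + 1 + 1) / (x + 1) - 1 :=
          log_le_sub_one_of_pos (by positivity)
      _ = 1 / (x + 1) := by field_simp; ring
  have hstep : (x + 1) * (log (x + 1 + 1) - log (x + 1)) ≤ 1 := by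
    calc (x + 1) * (log (x + 1 + 1) - log (x + 1)) ≤ (x + 1) * (1 / (x + 1)) :=
          mul_le_mul_of_nonneg_left hlog hx1.le
      _ = 1 := by field_simp
  rw [log_Gamma_add_one hx1]
  linarith

lemma half_mul_log_sub_log_Gamma_lt (j : ℕ) (hj : 1 ≤ j) :
    (j / 2 : ℝ) * log (j / 2 + 1) - log (Gamma (j / 2 + 1)) < j / 2 := by
  have hlog_two : log 2 < 1 := by linarith [log_two_lt_d9]
  have base_one : (1 / 2 : ℝ) * log (1 / 2 + 1) - log (Gamma (1 / 2 + 1)) < 1 / 2 := by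
    have hΓ : Gamma (1 / 2 + 1) = sqrt π / 2 := by
      rw [Gamma_add_one (by norm_num), Gamma_one_half_eq]; ring
    have hlog_three : log 3 < log π := log_lt_log (by norm_num) pi_gt_three
    rw [hΓ, log_div (by positivity) two_ne_zero, log_sqrt pi_pos.le,
      show (1 / 2 + 1 : ℝ) = 3 / 2 by norm_num, log_div (by norm_num) two_ne_zero]
    linarith
  have base_two : (2 / 2 : ℝ) * log (2 / 2 + 1) - log (Gamma (2 / 2 + 1)) < 2 / 2 := by
    norm_num [Gamma_two]
    exact hlog_two
  obtain ⟨i, rfl⟩ := Nat.exists_eq_add_of_le' hj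
  induction i using Nat.twoStepInduction with
  | zero => simpa using base_one
  | one => simpa using base_two
  | more i ih _ =>
    convert mul_log_sub_log_Gamma_lt_succ (by positivity) (ih (by omega)) using 2 <;>
      push_cast <;> ring_nf

lemma neg_sub_lt_log_Gamma_sub_div_mul {y x : ℝ} (hy : 0 < y) (hyx : y < x)
    (hx : x * log (x + 1) - log (Gamma (x + 1)) < x) :
    -(x - y) < log (Gamma (y + 1)) - y / x * log (Gamma (x + 1)) := by
  have hx0 : 0 < x := hy.trans hyx
  have hslope : log (x + 1) - 1 < log (Gamma (x + 1)) / x := by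
    rw [lt_div_iff₀ hx0]; linarith
  calc -(x - y) < (x - y) * (log (Gamma (x + 1)) / x - log (x + 1)) := by
        nlinarith [sub_pos.2 hyx]
    _ = (x - y) / x * log (Gamma (x + 1)) - (x - y) * log (x + 1) := by ring
    _ ≤ (x - y) / x * log (Gamma (x + 1)) - (log (Gamma (x + 1)) - log (Gamma (y + 1))) := by
        linarith [log_Gamma_add_one_sub_le hy hyx]
    _ = log (Gamma (y + 1)) - y / x * log (Gamma (x + 1)) := by field_simp; ring

lemma volume_unit_ball_toReal {p : ℕ} (hp : 1 ≤ p) :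
    (volume (ball (0 : E p) 1)).toReal = π ^ ((p : ℝ) / 2) / Gamma (p / 2 + 1) := by
  have : Nonempty (Fin p) := ⟨⟨0, hp⟩⟩
  rw [EuclideanSpace.volume_ball, Fintype.card_fin, ENNReal.ofReal_one, one_pow, one_mul,
    ENNReal.toReal_ofReal (by positivity), sqrt_eq_rpow, ← rpow_natCast, ← rpow_mul pi_pos.le]
  ring_nf

lemma cnk_eq_exp {n k : ℕ} (hkn : k < n) :
    cnk n k = exp (log (Gamma ((n - k : ℝ) / 2 + 1))
      - (n - k : ℝ) / 2 / (n / 2) * log (Gamma ((n : ℝ) / 2 + 1))) := by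
  have hkn' : (k : ℝ) < n := by exact_mod_cast hkn
  have hn : (n : ℝ) ≠ 0 := by linarith
  have hΓn : 0 < Gamma ((n : ℝ) / 2 + 1) := Gamma_pos_of_pos (by positivity)
  have hΓm : 0 < Gamma ((n - k : ℝ) / 2 + 1) := Gamma_pos_of_pos (by linarith)
  rw [cnk, volume_unit_ball_toReal (by omega), volume_unit_ball_toReal (by omega),
    Nat.cast_sub hkn.le, div_rpow (by positivity) hΓn.le, ← rpow_mul pi_pos.le, exp_sub,
    exp_log hΓm, mul_comm _ (log _), ← rpow_def_of_pos hΓn,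
    show (n / 2 : ℝ) * ((n - k) / n) = (n - k) / 2 by field_simp,
    show (n - k : ℝ) / 2 / (n / 2) = (n - k) / n by field_simp]
  field_simp

/-- For 1 ≤ k < n, the constant c_{n,k} lies strictly between e^{-k/2} and 1. -/
theorem cnk_bounds {n k : ℕ} (hk : 1 ≤ k) (hkn : k < n) :
    Real.exp (-(k : ℝ) / 2) < cnk n k ∧ cnk n k < 1 := by
  have hk' : (1 : ℝ) ≤ k := by exact_mod_cast hk
  have hkn' : (k : ℝ) < n := by exact_mod_cast hkn
  have hy : 0 < (n - k : ℝ) / 2 := by linarith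
  have hyx : (n - k : ℝ) / 2 < n / 2 := by linarith
  rw [cnk_eq_exp hkn]
  constructor
  · have := neg_sub_lt_log_Gamma_sub_div_mul hy hyx (half_mul_log_sub_log_Gamma_lt n (by omega))
    exact exp_lt_exp.2 (by linarith)
  · have := log_Gamma_add_one_div_lt_div hy hyx
    rw [div_lt_iff₀ hy] at this
    rwa [exp_lt_one_iff, sub_neg, div_mul_comm]
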